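/- Fix 0 < q < 1. For an integer n ≥ 0 and an integer x, define the magnetization ⟨S³_x⟩_n = W_x(n)/Z(n), where both sums run over pairs (A,B) with A a finite subset of {…,−1,0} and B a finite subset of {1,2,…} satisfying |B| = |A| + n: Z(n) = Σ_{(A,B)} q^{2(Σ_{y∈B} y − Σ_{x'∈A} x')} and W_x(n) = Σ_{(A,B)} q^{2(Σ_{y∈B} y − Σ_{x'∈A} x')} s_x(A,B), with s_x(A,B) = +1/2 if either (x ≤ 0 and x ∈ A) or (x ≥ 1 and x ∉ B), and s_x(A,B) = −1/2 otherwise. Then ⟨S³_x⟩_n = −1/2 + q^{2(n+1−x)} Σ_{k=0}^∞ (−1)^k q^{k(k+1+2(n+1−x))} whenever n ≥ x, and ⟨S³_x⟩_n = 1/2 − q^{2(x−n)} Σ_{k=0}^∞ (−1)^k q^{k(k+1+2(x−n))} whenever n ≤ x−1. -/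

import Mathlib

/-- Admissible pairs `(A,B)`: `A` a finite subset of `{…,−1,0}`, `B` a finite subset of
`{1,2,…}` with `|B| = |A| + n`. -/
def KinkPairs (n : ℕ) : Type :=
  {p : Finset ℤ × Finset ℤ //
    (∀ x ∈ p.1, x ≤ 0) ∧ (∀ y ∈ p.2, 1 ≤ y) ∧ p.2.card = p.1.card + n}

/-- The weight `q^{2(Σ_{y∈B} y − Σ_{x∈A} x)}` of a pair `(A,B)`. -/
noncomputable def kinkWeight (q : ℝ) {n : ℕ} (p : KinkPairs n) : ℝ :=
  q ^ (2 * ((∑ y ∈ p.val.2, y) - ∑ x ∈ p.val.1, x))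

/-- The value `s_x(A,B)` of the third spin component at site `x` in the configuration
`(A,B)`: `+1/2` if either (`x ≤ 0` and `x ∈ A`) or (`x ≥ 1` and `x ∉ B`), `−1/2` otherwise. -/
noncomputable def spinAt (x : ℤ) {n : ℕ} (p : KinkPairs n) : ℝ :=
  if (x ≤ 0 ∧ x ∈ p.val.1) ∨ (1 ≤ x ∧ x ∉ p.val.2) then 1/2 else -1/2

/-!
Encode a pair `(A, B)` by its set `S = A ∪ B` of flipped sites: its weight is
`q ^ (2 ∑_{s ∈ S} |s|)` and its sector is `n = #B - #A`. Shifting the spin configuration one site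
to the right is a bijection from sector `n` onto sector `n + 1` that multiplies weights by
`q ^ (2 (n + 1))`, so the profile in sector `n` is the profile in sector `0` shifted by `n`, and
`Z n = q ^ (n (n + 1)) Z 0`.
In sector `0`, mirroring `x ↦ 1 - x` combined with the global spin flip preserves weights and
reverses spins, which reduces `x ≥ 1` to `x ≤ 0`. For `x ≤ 0`, removing `x` from `S` maps the
configurations of sector `n` with `x` flipped onto those of sector `n + 1` with `x` unflipped,
multiplying weights by `q ^ (2 x)`; hence `Z n = q ^ (-2 x) G (n + 1) + G n`, where `G n` sums
over configurations with `x` unflipped. Iterating this from `n = 1` gives the alternating series,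
and the remainder `q ^ (-2 x k) G k ≤ q ^ (k (k + 1 - 2 x)) Z 0` tends to `0`.
-/

open Finset Filter Topology
open scoped symmDiff

theorem tsum_ite_comp_equiv {α β : Type*} (e : α ≃ β) {P : β → Prop} {Q : α → Prop}
    [DecidablePred P] [DecidablePred Q] {f : β → ℝ} {g : α → ℝ} (c : ℝ)
    (hPQ : ∀ a, P (e a) ↔ Q a) (hfg : ∀ a, Q a → f (e a) = c * g a) :
    (∑' b, if P b then f b else 0) = c * ∑' a, if Q a then g a else 0 := by
  rw [← e.tsum_eq, ← tsum_mul_left]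
  refine tsum_congr fun a => ?_
  simp only [hPQ, mul_ite, mul_zero]
  split_ifs with h
  exacts [hfg a h, rfl]

theorem Summable.ite_zero {α : Type*} {f : α → ℝ} (hf : Summable f) (P : α → Prop)
    [DecidablePred P] : Summable fun a => if P a then f a else 0 :=
  (hf.indicator {a | P a}).congr fun a => by simp [Set.indicator_apply]

theorem Finset.sum_symmDiff_singleton {α M : Type*} [DecidableEq α] [AddCommGroup M]
    (s : Finset α) (a : α) (f : α → M) :
    ∑ x ∈ s ∆ {a}, f x = ∑ x ∈ s, f x + if a ∈ s then -f a else f a := by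
  by_cases ha : a ∈ s
  · have : s ∆ {a} = s.erase a := by ext; grind [mem_symmDiff]
    rw [this, if_pos ha, ← sum_erase_add _ _ ha]
    abel
  · have : s ∆ {a} = insert a s := by ext; grind [mem_symmDiff]
    rw [this, if_neg ha, sum_insert ha, add_comm]

theorem tsum_alternating_eq_of_eq_mul_add {c : ℝ} {Z G : ℕ → ℝ}
    (hrec : ∀ n, Z n = c * G (n + 1) + G n)
    (hsum : Summable fun k => (-1) ^ k * (c ^ (k + 1) * Z (k + 1)))
    (htail : Tendsto (fun k => c ^ k * G k) atTop (𝓝 0)) :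
    ∑' k, (-1) ^ k * (c ^ (k + 1) * Z (k + 1)) = c * G 1 := by
  have partial_sum : ∀ K, ∑ k ∈ range K, (-1) ^ k * (c ^ (k + 1) * Z (k + 1))
      = c * G 1 - (-1) ^ K * (c ^ (K + 1) * G (K + 1)) := by
    intro K
    induction K with
    | zero => simp
    | succ K ih => rw [sum_range_succ, ih, hrec]; ring
  have hrem : Tendsto (fun K => (-1 : ℝ) ^ K * (c ^ (K + 1) * G (K + 1))) atTop (𝓝 0) := by
    refine squeeze_zero_norm (fun K => ?_)
      (by simpa using ((tendsto_add_atTop_iff_nat 1).mpr htail).norm)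
    simp [norm_mul]
  refine (hsum.hasSum_iff_tendsto_nat.mpr ?_).tsum_eq
  simpa [partial_sum] using tendsto_const_nhds.sub hrem

namespace Kink

def siteCharge (s : ℤ) : ℤ := if 0 < s then 1 else -1

def charge (S : Finset ℤ) : ℤ := ∑ s ∈ S, siteCharge s

def size (S : Finset ℤ) : ℤ := ∑ s ∈ S, |s|

noncomputable def weight (q : ℝ) (S : Finset ℤ) : ℝ := q ^ (2 * size S)

noncomputable def spin (x : ℤ) (S : Finset ℤ) : ℝ :=
  if (x ∈ S ↔ x ≤ 0) then 1/2 else -1/2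

lemma charge_eq_card_sub_card (S : Finset ℤ) :
    charge S = #(S.filter (0 < ·)) - #(S.filter (· ≤ 0)) := by
  simp only [charge, siteCharge, sum_ite, sum_const, nsmul_eq_mul, mul_one, mul_neg, not_lt]
  ring

lemma siteCharge_add_one (s : ℤ) :
    siteCharge (s + 1) = siteCharge s + if s = 0 then 2 else 0 := by
  unfold siteCharge; split_ifs <;> omega

lemma abs_add_one (s : ℤ) : |s + 1| = |s| + siteCharge s + if s = 0 then 2 else 0 := by
  unfold siteCharge; split_ifs <;> grind

lemma siteCharge_one_sub (s : ℤ) : siteCharge (1 - s) = -siteCharge s := by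
  unfold siteCharge; split_ifs <;> omega

lemma abs_one_sub (s : ℤ) : |1 - s| = |s| - siteCharge s := by
  unfold siteCharge; split_ifs <;> grind

section KinkPairs

variable {n : ℕ}

lemma filter_nonpos_union (p : KinkPairs n) : (p.1.1 ∪ p.1.2).filter (· ≤ 0) = p.1.1 := by
  ext s
  have := p.2.1 s
  have := p.2.2.1 s
  simp only [mem_filter, mem_union]
  grind

lemma filter_pos_union (p : KinkPairs n) : (p.1.1 ∪ p.1.2).filter (0 < ·) = p.1.2 := by
  ext s
  have := p.2.1 s
  have := p.2.2.1 s
  simp only [mem_filter, mem_union]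
  grind

def kinkPairsEquiv (n : ℕ) : KinkPairs n ≃ {S : Finset ℤ // charge S = n} where
  toFun p := ⟨p.1.1 ∪ p.1.2, by
    rw [charge_eq_card_sub_card, filter_nonpos_union, filter_pos_union, p.2.2.2]
    push_cast
    ring⟩
  invFun S := ⟨(S.1.filter (· ≤ 0), S.1.filter (0 < ·)), by
    refine ⟨fun s hs => (mem_filter.mp hs).2, fun s hs => (mem_filter.mp hs).2, ?_⟩
    show #(S.1.filter (0 < ·)) = #(S.1.filter (· ≤ 0)) + n
    have := charge_eq_card_sub_card S.1
    omega⟩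
  left_inv p := Subtype.ext (Prod.ext (filter_nonpos_union p) (filter_pos_union p))
  right_inv S := Subtype.ext <| show S.1.filter (· ≤ 0) ∪ S.1.filter (0 < ·) = S.1 by
    rw [← filter_or, filter_true_of_mem fun s _ => le_or_gt s 0]

lemma coe_kinkPairsEquiv (p : KinkPairs n) :
    (kinkPairsEquiv n p : Finset ℤ) = p.1.1 ∪ p.1.2 := rfl

lemma kinkWeight_eq (q : ℝ) (p : KinkPairs n) :
    kinkWeight q p = weight q (kinkPairsEquiv n p) := by
  have hdisj : Disjoint p.1.1 p.1.2 :=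
    disjoint_left.mpr fun s hA hB => by linarith [p.2.1 s hA, p.2.2.1 s hB]
  have hA : ∑ s ∈ p.1.1, |s| = -∑ s ∈ p.1.1, s := by
    rw [← sum_neg_distrib]; exact sum_congr rfl fun s hs => abs_of_nonpos (p.2.1 s hs)
  have hB : ∑ s ∈ p.1.2, |s| = ∑ s ∈ p.1.2, s :=
    sum_congr rfl fun s hs => abs_of_pos (p.2.2.1 s hs)
  rw [kinkWeight, weight, size, coe_kinkPairsEquiv, sum_union hdisj, hA, hB]
  ring_nf

lemma spinAt_eq (x : ℤ) (p : KinkPairs n) : spinAt x p = spin x (kinkPairsEquiv n p) := by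
  have := p.2.1 x
  have := p.2.2.1 x
  rw [spinAt, spin, coe_kinkPairsEquiv]
  exact if_congr (by simp only [mem_union]; grind) rfl rfl

lemma tsum_kinkPairs (f : Finset ℤ → ℝ) :
    ∑' p : KinkPairs n, f (kinkPairsEquiv n p) = ∑' S, if charge S = n then f S else 0 := by
  rw [(kinkPairsEquiv n).tsum_eq (fun S => f S)]
  exact (tsum_subtype {S | charge S = n} f).trans (by simp [Set.indicator_apply])

lemma summable_kinkPairs {f : Finset ℤ → ℝ} (hf : Summable f) :
    Summable fun p : KinkPairs n => f (kinkPairsEquiv n p) :=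
  (kinkPairsEquiv n).summable_iff.mpr (hf.subtype _)

end KinkPairs

def toggle (a : ℤ) : Equiv.Perm (Finset ℤ) :=
  Function.Involutive.toPerm (· ∆ {a}) fun _ => symmDiff_symmDiff_cancel_right _ _

@[simp] lemma toggle_apply (a : ℤ) (S : Finset ℤ) : toggle a S = S ∆ {a} := rfl

lemma mem_toggle_self {a : ℤ} {S : Finset ℤ} : a ∈ toggle a S ↔ a ∉ S := by
  simp [mem_symmDiff]

/-- The flip set of the spin configuration of `S` shifted one site to the right. -/
def translate : Equiv.Perm (Finset ℤ) := (Equiv.addRight 1).finsetCongr.trans (toggle 1)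

/-- The flip set of the configuration of `S` mirrored by `x ↦ 1 - x` and then globally flipped. -/
def reflect : Equiv.Perm (Finset ℤ) := (Equiv.subLeft 1).finsetCongr

lemma sum_translate (f : ℤ → ℤ) (S : Finset ℤ) :
    ∑ s ∈ translate S, f s = ∑ s ∈ S, f (s + 1) + if 0 ∈ S then -f 1 else f 1 := by
  rw [translate, Equiv.trans_apply, toggle_apply, sum_symmDiff_singleton,
    Equiv.finsetCongr_apply, sum_map]
  simp

lemma mem_translate {x : ℤ} {S : Finset ℤ} :
    x ∈ translate S ↔ (x - 1 ∈ S ↔ x ≠ 1) := by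
  by_cases hx : x = 1 <;> simp [translate, mem_symmDiff, hx, ← sub_eq_add_neg]

lemma sum_add_ite_eq_zero (f : ℤ → ℤ) (S : Finset ℤ) :
    ∑ s ∈ S, (f s + if s = 0 then 2 else 0) = ∑ s ∈ S, f s + if 0 ∈ S then 2 else 0 := by
  rw [sum_add_distrib, sum_ite_eq']

lemma charge_translate (S : Finset ℤ) : charge (translate S) = charge S + 1 := by
  simp only [charge, sum_translate, siteCharge_add_one, sum_add_ite_eq_zero]
  have : siteCharge 1 = 1 := rfl
  split_ifs <;> linarith

lemma size_translate (S : Finset ℤ) : size (translate S) = size S + charge S + 1 := by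
  rw [size, sum_translate, sum_congr rfl fun s _ => abs_add_one s, sum_add_ite_eq_zero,
    sum_add_distrib, size, charge]
  split_ifs <;> linarith [abs_one (α := ℤ)]

lemma spin_translate (x : ℤ) (S : Finset ℤ) : spin (x + 1) (translate S) = spin x S := by
  refine if_congr ?_ rfl rfl
  rw [mem_translate, add_sub_cancel_right]
  grind

lemma sum_reflect (f : ℤ → ℤ) (S : Finset ℤ) :
    ∑ s ∈ reflect S, f s = ∑ s ∈ S, f (1 - s) :=
  sum_map _ _ _

lemma mem_reflect {x : ℤ} {S : Finset ℤ} : x ∈ reflect S ↔ 1 - x ∈ S := by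
  simp [reflect, mem_map_equiv, ← sub_eq_neg_add]

lemma charge_reflect (S : Finset ℤ) : charge (reflect S) = -charge S := by
  simp only [charge, sum_reflect, siteCharge_one_sub, sum_neg_distrib]

lemma size_reflect (S : Finset ℤ) : size (reflect S) = size S - charge S := by
  simp only [size, charge, sum_reflect, abs_one_sub, sum_sub_distrib]

lemma spin_reflect (x : ℤ) (S : Finset ℤ) : spin (1 - x) (reflect S) = -spin x S := by
  have : ¬(1 - x ≤ 0 ↔ x ≤ 0) := by omega
  simp only [spin, mem_reflect, sub_sub_cancel]
  split_ifs <;> first | tauto | norm_num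

section Weights

variable {q : ℝ} {x : ℤ}

lemma weight_pos (hq0 : 0 < q) (S : Finset ℤ) : 0 < weight q S := zpow_pos hq0 _

lemma weight_eq_prod (q : ℝ) (S : Finset ℤ) : weight q S = ∏ s ∈ S, (q ^ 2) ^ s.natAbs := by
  have : size S = ((∑ s ∈ S, s.natAbs : ℕ) : ℤ) := by simp [size]
  rw [weight, this, zpow_mul, zpow_natCast, zpow_ofNat, prod_pow_eq_pow_sum]

lemma summable_weight (hq0 : 0 < q) (hq1 : q < 1) : Summable (weight q) := by
  have hgeom := summable_geometric_of_lt_one (sq_nonneg q) (pow_lt_one₀ hq0.le hq1 two_ne_zero)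
  have hsite : Summable fun s : ℤ => (q ^ 2) ^ s.natAbs :=
    .of_nat_of_neg (by simpa using hgeom) (by simpa using hgeom)
  rw [funext (weight_eq_prod q)]
  exact summable_finsetProd_of_summable_nonneg (fun s => by positivity) hsite

lemma summable_weight_mul_spin (hq0 : 0 < q) (hq1 : q < 1) (x : ℤ) :
    Summable fun S => weight q S * spin x S := by
  refine (summable_weight hq0 hq1).of_norm_bounded fun S => ?_
  have := weight_pos hq0 S
  rw [norm_mul, Real.norm_of_nonneg this.le, spin]
  split_ifs <;> norm_num <;> linarith

noncomputable def partitionFn (q : ℝ) (n : ℤ) : ℝ :=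
  ∑' S, if charge S = n then weight q S else 0

noncomputable def spinSum (q : ℝ) (n x : ℤ) : ℝ :=
  ∑' S, if charge S = n then weight q S * spin x S else 0

noncomputable def partitionFnUnflipped (q : ℝ) (n x : ℤ) : ℝ :=
  ∑' S, if charge S = n ∧ x ∉ S then weight q S else 0

lemma weight_translate (hq : q ≠ 0) (S : Finset ℤ) :
    weight q (translate S) = q ^ (2 * (charge S + 1)) * weight q S := by
  rw [weight, weight, size_translate, ← zpow_add₀ hq]
  ring_nf

lemma weight_reflect (hq : q ≠ 0) (S : Finset ℤ) :
    weight q (reflect S) = q ^ (-2 * charge S) * weight q S := by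
  rw [weight, weight, size_reflect, ← zpow_add₀ hq]
  ring_nf

lemma partitionFn_succ (hq : q ≠ 0) (n : ℤ) :
    partitionFn q (n + 1) = q ^ (2 * (n + 1)) * partitionFn q n :=
  tsum_ite_comp_equiv translate _ (fun S => by rw [charge_translate, add_left_inj])
    fun S hS => by rw [weight_translate hq, hS]

lemma spinSum_succ (hq : q ≠ 0) (n x : ℤ) :
    spinSum q (n + 1) (x + 1) = q ^ (2 * (n + 1)) * spinSum q n x :=
  tsum_ite_comp_equiv translate _ (fun S => by rw [charge_translate, add_left_inj])
    fun S hS => by rw [weight_translate hq, hS, spin_translate, mul_assoc]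

lemma spinSum_reflect (hq : q ≠ 0) (n x : ℤ) :
    spinSum q (-n) (1 - x) = -q ^ (-2 * n) * spinSum q n x :=
  tsum_ite_comp_equiv reflect _ (fun S => by rw [charge_reflect, neg_inj])
    fun S hS => by rw [weight_reflect hq, hS, spin_reflect]; ring

lemma partitionFn_natCast (hq : q ≠ 0) (n : ℕ) :
    partitionFn q n = q ^ ((n : ℤ) * (n + 1)) * partitionFn q 0 := by
  induction n with
  | zero => simp
  | succ n ih =>
    rw [Nat.cast_succ, partitionFn_succ hq, ih, ← mul_assoc, ← zpow_add₀ hq]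
    ring_nf

lemma spinSum_div_partitionFn (hq : q ≠ 0) (n : ℕ) (x : ℤ) :
    spinSum q n x / partitionFn q n = spinSum q 0 (x - n) / partitionFn q 0 := by
  induction n generalizing x with
  | zero => simp
  | succ n ih =>
    have h := spinSum_succ hq n (x - 1)
    rw [sub_add_cancel] at h
    rw [Nat.cast_succ, h, partitionFn_succ hq, mul_div_mul_left _ _ (zpow_ne_zero _ hq), ih,
      sub_sub, add_comm]

lemma partitionFn_zero_pos (hq0 : 0 < q) (hq1 : q < 1) : 0 < partitionFn q 0 :=
  ((summable_weight hq0 hq1).ite_zero _).tsum_pos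
    (fun S => by split_ifs; exacts [(weight_pos hq0 S).le, le_rfl]) ∅
    (by simp [charge, weight_pos hq0])

lemma tsum_weight_of_mem (hq : q ≠ 0) (hx : x ≤ 0) (n : ℤ) :
    ∑' S, (if charge S = n ∧ x ∈ S then weight q S else 0)
      = q ^ (-2 * x) * partitionFnUnflipped q (n + 1) x := by
  have hσ : siteCharge x = -1 := if_neg (by omega)
  refine tsum_ite_comp_equiv (toggle x) _ (fun S => ?_) fun S hS => ?_
  · rw [mem_toggle_self]
    by_cases hS : x ∈ S
    · simp [hS]
    · rw [toggle_apply, charge, sum_symmDiff_singleton, if_neg hS, hσ, ← charge]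
      simp only [hS, not_false_eq_true, and_true]
      omega
  · rw [toggle_apply, weight, weight, size, sum_symmDiff_singleton, if_neg hS.2, ← size,
      abs_of_nonpos hx, ← zpow_add₀ hq]
    ring_nf

lemma partitionFn_eq (hq0 : 0 < q) (hq1 : q < 1) (hx : x ≤ 0) (n : ℤ) :
    partitionFn q n = q ^ (-2 * x) * partitionFnUnflipped q (n + 1) x
      + partitionFnUnflipped q n x := by
  rw [← tsum_weight_of_mem hq0.ne' hx, partitionFnUnflipped,
    ← ((summable_weight hq0 hq1).ite_zero _).tsum_add ((summable_weight hq0 hq1).ite_zero _)]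
  refine tsum_congr fun S => ?_
  by_cases hS : x ∈ S <;> simp [hS]

lemma spinSum_eq (hq0 : 0 < q) (hq1 : q < 1) (hx : x ≤ 0) (n : ℤ) :
    spinSum q n x = q ^ (-2 * x) * partitionFnUnflipped q (n + 1) x - partitionFn q n / 2 := by
  rw [← tsum_weight_of_mem hq0.ne' hx, partitionFn, ← tsum_div_const,
    ← ((summable_weight hq0 hq1).ite_zero _).tsum_sub
      (((summable_weight hq0 hq1).ite_zero _).div_const 2)]
  refine tsum_congr fun S => ?_
  by_cases hS : x ∈ S <;> by_cases hn : charge S = n <;> simp [spin, hS, hn, hx] <;> ring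

lemma partitionFnUnflipped_nonneg (hq0 : 0 < q) (n : ℤ) : 0 ≤ partitionFnUnflipped q n x :=
  tsum_nonneg fun S => by split_ifs; exacts [(weight_pos hq0 S).le, le_rfl]

lemma partitionFnUnflipped_le (hq0 : 0 < q) (hq1 : q < 1) (n : ℤ) :
    partitionFnUnflipped q n x ≤ partitionFn q n :=
  Summable.tsum_le_tsum (fun S => by split_ifs <;> simp_all [(weight_pos hq0 S).le])
    ((summable_weight hq0 hq1).ite_zero _) ((summable_weight hq0 hq1).ite_zero _)

lemma zpow_mul_partitionFn (hq : q ≠ 0) (x : ℤ) (k : ℕ) :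
    (q ^ (-2 * x)) ^ k * partitionFn q k = q ^ ((k : ℤ) * (k + 1 - 2 * x)) * partitionFn q 0 := by
  rw [partitionFn_natCast hq, ← zpow_natCast, ← zpow_mul, ← mul_assoc, ← zpow_add₀ hq]
  ring_nf

lemma zpow_mul_partitionFn_le (hq0 : 0 < q) (hq1 : q < 1) (hx : x ≤ 0) (k : ℕ) :
    (q ^ (-2 * x)) ^ k * partitionFn q k ≤ q ^ k * partitionFn q 0 := by
  rw [zpow_mul_partitionFn hq0.ne', ← zpow_natCast]
  exact mul_le_mul_of_nonneg_right (zpow_le_zpow_right_of_le_one₀ hq0 hq1.le (by nlinarith))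
    (partitionFn_zero_pos hq0 hq1).le

lemma summable_alternating_partitionFn (hq0 : 0 < q) (hq1 : q < 1) (hx : x ≤ 0) :
    Summable fun k : ℕ =>
      (-1 : ℝ) ^ k * ((q ^ (-2 * x)) ^ (k + 1) * partitionFn q (k + 1 : ℕ)) := by
  refine ((summable_geometric_of_lt_one hq0.le hq1).mul_right (q * partitionFn q 0)).of_norm_bounded
    fun k => ?_
  have hle := zpow_mul_partitionFn_le hq0 hq1 hx (k + 1)
  rw [pow_succ q k, mul_assoc] at hle
  rwa [norm_mul, norm_pow, norm_neg, norm_one, one_pow, one_mul, Real.norm_of_nonneg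
    (by rw [zpow_mul_partitionFn hq0.ne']; exact (mul_pos (by positivity)
      (partitionFn_zero_pos hq0 hq1)).le)]

lemma tendsto_zpow_mul_partitionFnUnflipped (hq0 : 0 < q) (hq1 : q < 1) (hx : x ≤ 0) :
    Tendsto (fun k : ℕ => (q ^ (-2 * x)) ^ k * partitionFnUnflipped q k x) atTop (𝓝 0) := by
  have hc : 0 ≤ (q ^ (-2 * x)) := by positivity
  refine squeeze_zero (fun k => mul_nonneg (pow_nonneg hc _) (partitionFnUnflipped_nonneg hq0 _))
    (fun k => (mul_le_mul_of_nonneg_left (partitionFnUnflipped_le hq0 hq1 _)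
      (pow_nonneg hc k)).trans (zpow_mul_partitionFn_le hq0 hq1 hx k)) ?_
  simpa using (tendsto_pow_atTop_nhds_zero_of_lt_one hq0.le hq1).mul_const (partitionFn q 0)

lemma spinSum_zero_div_of_nonpos (hq0 : 0 < q) (hq1 : q < 1) (hx : x ≤ 0) :
    spinSum q 0 x / partitionFn q 0 = -(1/2) + q ^ (2 * (1 - x)) *
      ∑' k : ℕ, (-1 : ℝ) ^ k * q ^ ((k : ℤ) * ((k : ℤ) + 1 + 2 * (1 - x))) := by
  have htel := tsum_alternating_eq_of_eq_mul_add (Z := fun k : ℕ => partitionFn q k)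
    (G := fun k : ℕ => partitionFnUnflipped q k x)
    (fun k => by push_cast; exact partitionFn_eq hq0 hq1 hx k)
    (summable_alternating_partitionFn hq0 hq1 hx) (tendsto_zpow_mul_partitionFnUnflipped hq0 hq1 hx)
  have hterm : ∀ k : ℕ,
      (-1 : ℝ) ^ k * ((q ^ (-2 * x)) ^ (k + 1) * partitionFn q (k + 1 : ℕ))
        = q ^ (2 * (1 - x)) * ((-1) ^ k * q ^ ((k : ℤ) * (k + 1 + 2 * (1 - x))))
          * partitionFn q 0 := by
    intro k
    rw [zpow_mul_partitionFn hq0.ne', show ((k + 1 : ℕ) : ℤ) * ((k + 1 : ℕ) + 1 - 2 * x)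
        = 2 * (1 - x) + k * (k + 1 + 2 * (1 - x)) by push_cast; ring, zpow_add₀ hq0.ne']
    ring
  rw [tsum_congr hterm, tsum_mul_right, tsum_mul_left, Nat.cast_one] at htel
  have hZ₀ := (partitionFn_zero_pos hq0 hq1).ne'
  rw [spinSum_eq hq0 hq1 hx, zero_add, ← htel]
  field_simp
  ring

lemma tsum_kinkWeight {n : ℕ} : ∑' p : KinkPairs n, kinkWeight q p = partitionFn q n := by
  simp only [kinkWeight_eq]
  exact tsum_kinkPairs _

lemma tsum_kinkWeight_mul_spinAt {n : ℕ} (x : ℤ) :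
    ∑' p : KinkPairs n, kinkWeight q p * spinAt x p = spinSum q n x := by
  simp only [kinkWeight_eq, spinAt_eq]
  exact tsum_kinkPairs (fun S => weight q S * spin x S)

end Weights

end Kink

open Kink

/-- the magnetization profile `⟨S³_x⟩_n = W_x(n)/Z(n)` of the infinite-volume
kink ground state is given by the stated q-series, in the two regimes `n ≥ x` and `n ≤ x−1`. -/
theorem stmt4 (q : ℝ) (hq0 : 0 < q) (hq1 : q < 1) (n : ℕ) (x : ℤ) :
    Summable (fun p : KinkPairs n => kinkWeight q p) ∧
    Summable (fun p : KinkPairs n => kinkWeight q p * spinAt x p) ∧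
    (x ≤ (n : ℤ) →
      (∑' p : KinkPairs n, kinkWeight q p * spinAt x p) / (∑' p : KinkPairs n, kinkWeight q p)
        = -(1/2) + q ^ (2 * ((n : ℤ) + 1 - x)) *
            ∑' k : ℕ, (-1 : ℝ) ^ k * q ^ ((k : ℤ) * ((k : ℤ) + 1 + 2 * ((n : ℤ) + 1 - x)))) ∧
    ((n : ℤ) ≤ x - 1 →
      (∑' p : KinkPairs n, kinkWeight q p * spinAt x p) / (∑' p : KinkPairs n, kinkWeight q p)
        = 1/2 - q ^ (2 * (x - (n : ℤ))) *
            ∑' k : ℕ, (-1 : ℝ) ^ k * q ^ ((k : ℤ) * ((k : ℤ) + 1 + 2 * (x - (n : ℤ))))) := by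
  rw [tsum_kinkWeight, tsum_kinkWeight_mul_spinAt, spinSum_div_partitionFn hq0.ne']
  refine ⟨?_, ?_, fun hxn => ?_, fun hxn => ?_⟩
  · simpa only [kinkWeight_eq] using summable_kinkPairs (summable_weight hq0 hq1)
  · simpa only [kinkWeight_eq, spinAt_eq] using
      summable_kinkPairs (summable_weight_mul_spin hq0 hq1 x)
  · rw [spinSum_zero_div_of_nonpos hq0 hq1 (by omega),
      show 1 - (x - n) = (n : ℤ) + 1 - x by ring]
  · have hreflect : spinSum q 0 (x - n) = -spinSum q 0 (1 - (x - n)) := by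
      simpa using spinSum_reflect hq0.ne' 0 (1 - (x - n))
    rw [hreflect, neg_div, spinSum_zero_div_of_nonpos hq0 hq1 (by omega), sub_sub_cancel]
    ring
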